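/- arXiv:1001.3742 — 2 statements merged into one kernel-verified Lean document; each statement's English description precedes it below -/
import Mathlib

section
/- Let γ ∈ (0,1], α > γ + 1, C > 0, and let K(s,t) = ∑_{j>=2} C j^(-α) * 2 * cos(jπs) * cos(jπt) (plus the constant term, which cancels). Then for all s, t ∈ [0,1], K(s,s) - 2K(s,t) + K(t,t) <= C * 2^(3-γ) * π^γ * (1/(α-γ-1)) * |t-s|^γ. -/
open Real

/-!
Expanding the three series, `K s s - 2 * K s t + K t t = ∑ 2 C n^(-α) (cos nπs - cos nπt)^2`
over `n ≥ 2`. Interpolating between `|cos a - cos b| ≤ 2` and `|cos a - cos b| ≤ |a - b|`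
bounds each square by `2^(2-γ) (nπ|t - s|)^γ`, and the remaining series `∑_{n ≥ 2} n^(γ-α)` is
at most `∫_1^∞ x^(γ-α) dx = 1 / (α - γ - 1)`.
-/

lemma summable_nat_add_two_rpow_neg {p : ℝ} (hp : 1 < p) :
    Summable fun j : ℕ => ((j : ℝ) + 2) ^ (-p) :=
  ((summable_nat_add_iff 2).mpr ((Real.summable_nat_rpow (p := -p)).mpr (by linarith))).congr
    fun j => by push_cast; rfl

lemma tsum_nat_add_two_rpow_neg_le {p : ℝ} (hp : 1 < p) :
    ∑' j : ℕ, ((j : ℝ) + 2) ^ (-p) ≤ 1 / (p - 1) := by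
  refine Real.tsum_le_of_sum_range_le (fun j => by positivity) fun n => ?_
  have hanti : AntitoneOn (fun x : ℝ => x ^ (-p)) (Set.Icc 1 (1 + n)) :=
    fun x hx y _ hxy => Real.rpow_le_rpow_of_nonpos (by linarith [hx.1]) hxy (by linarith)
  have hzero : (0 : ℝ) ∉ Set.uIcc (1 : ℝ) (1 + n) := by
    rw [Set.uIcc_of_le (by linarith [n.cast_nonneg (α := ℝ)])]
    exact fun h => absurd h.1 (by norm_num)
  calc ∑ j ∈ Finset.range n, ((j : ℝ) + 2) ^ (-p)
      = ∑ i ∈ Finset.range n, (1 + ((i + 1 : ℕ) : ℝ)) ^ (-p) := by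
        push_cast; ring_nf
    _ ≤ ∫ x in (1 : ℝ)..1 + n, x ^ (-p) := hanti.sum_le_integral
    _ = (1 - (1 + n : ℝ) ^ (1 - p)) / (p - 1) := by
        rw [integral_rpow (Or.inr ⟨by linarith, hzero⟩), one_rpow,
          div_eq_div_iff (by linarith) (by linarith)]
        ring_nf
    _ ≤ 1 / (p - 1) := by
        have := Real.rpow_nonneg (by positivity : (0 : ℝ) ≤ 1 + n) (1 - p)
        gcongr
        linarith

lemma cos_sub_cos_sq_le {γ : ℝ} (hγ0 : 0 ≤ γ) (hγ2 : γ ≤ 2) (x y : ℝ) :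
    (cos x - cos y) ^ 2 ≤ 2 ^ (2 - γ) * |x - y| ^ γ := by
  set m := |cos x - cos y|
  have hm0 : 0 ≤ m := abs_nonneg _
  have hm2 : m ≤ 2 := (abs_sub _ _).trans (by linarith [abs_cos_le_one x, abs_cos_le_one y])
  calc (cos x - cos y) ^ 2 = m ^ (2 - γ) * m ^ γ := by
        rw [← Real.rpow_add' hm0 (by norm_num), sub_add_cancel, Real.rpow_two, sq_abs]
    _ ≤ 2 ^ (2 - γ) * |x - y| ^ γ := by
        gcongr
        exact abs_cos_sub_cos_le x y

lemma hasSum_mul_cos_sub_cos_sq {ι : Type*} {w : ι → ℝ} (hw : Summable w) (x y : ι → ℝ) :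
    HasSum (fun j => w j * (cos (x j) - cos (y j)) ^ 2)
      (∑' j, w j * cos (x j) * cos (x j) - 2 * ∑' j, w j * cos (x j) * cos (y j)
        + ∑' j, w j * cos (y j) * cos (y j)) := by
  have summable (u v : ι → ℝ) : Summable fun j => w j * cos (u j) * cos (v j) :=
    hw.norm.of_norm_bounded fun j => by
      rw [norm_mul, norm_mul]
      exact mul_le_of_le_one_right (by positivity) (abs_cos_le_one _) |>.trans
        (mul_le_of_le_one_right (norm_nonneg _) (abs_cos_le_one _))
  exact (((summable x x).hasSum.sub ((summable x y).hasSum.mul_left 2)).add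
    (summable y y).hasSum).congr_fun fun j => by ring

lemma rpow_neg_mul_cos_mul_sub_cos_mul_sq_le {γ α n : ℝ} (hγ0 : 0 ≤ γ) (hγ2 : γ ≤ 2) (hn : 0 < n)
    (s t : ℝ) :
    n ^ (-α) * 2 * (cos (n * π * s) - cos (n * π * t)) ^ 2
      ≤ 2 ^ (3 - γ) * π ^ γ * |t - s| ^ γ * n ^ (-(α - γ)) := by
  have hdist : |n * π * s - n * π * t| = n * π * |t - s| := by
    rw [← mul_sub, abs_mul, abs_of_nonneg (by positivity), abs_sub_comm]
  have hpow : n ^ (-(α - γ)) = n ^ (-α) * n ^ γ := by rw [← Real.rpow_add hn]; ring_nf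
  have htwo : (2 : ℝ) ^ (3 - γ) = 2 * 2 ^ (2 - γ) := by
    rw [show (3 : ℝ) - γ = 1 + (2 - γ) by ring, Real.rpow_add two_pos, Real.rpow_one]
  calc n ^ (-α) * 2 * (cos (n * π * s) - cos (n * π * t)) ^ 2
      ≤ n ^ (-α) * 2 * (2 ^ (2 - γ) * (n * π * |t - s|) ^ γ) := by
        gcongr
        exact hdist ▸ cos_sub_cos_sq_le hγ0 hγ2 _ _
    _ = 2 ^ (3 - γ) * π ^ γ * |t - s| ^ γ * n ^ (-(α - γ)) := by
        rw [Real.mul_rpow (by positivity) (abs_nonneg _), Real.mul_rpow hn.le pi_pos.le, hpow, htwo]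
        ring

theorem stmt_5 (γ α C : ℝ) (hγ0 : 0 < γ) (hγ1 : γ ≤ 1) (hα : γ + 1 < α) (hC : 0 < C)
    (K : ℝ → ℝ → ℝ)
    (hK : ∀ s t : ℝ, K s t =
      ∑' j : ℕ, C * ((j : ℝ) + 2) ^ (-α) * 2 * Real.cos (((j : ℝ) + 2) * π * s)
        * Real.cos (((j : ℝ) + 2) * π * t)) :
    ∀ s ∈ Set.Icc (0 : ℝ) 1, ∀ t ∈ Set.Icc (0 : ℝ) 1,
      K s s - 2 * K s t + K t t ≤
        C * 2 ^ (3 - γ) * π ^ γ * (1 / (α - γ - 1)) * |t - s| ^ γ := by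
  intro s _ t _
  set w : ℕ → ℝ := fun j => C * ((j : ℝ) + 2) ^ (-α) * 2
  set c := C * 2 ^ (3 - γ) * π ^ γ * |t - s| ^ γ
  have hw : Summable w := ((summable_nat_add_two_rpow_neg (by linarith)).mul_left C).mul_right 2
  have hsum := hasSum_mul_cos_sub_cos_sq hw (fun j => ((j : ℝ) + 2) * π * s)
    (fun j => ((j : ℝ) + 2) * π * t)
  have hterm (j : ℕ) : w j * (cos (((j : ℝ) + 2) * π * s) - cos (((j : ℝ) + 2) * π * t)) ^ 2
      ≤ c * ((j : ℝ) + 2) ^ (-(α - γ)) := by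
    calc _ = C * (((j : ℝ) + 2) ^ (-α) * 2
          * (cos (((j : ℝ) + 2) * π * s) - cos (((j : ℝ) + 2) * π * t)) ^ 2) := by ring
      _ ≤ C * (2 ^ (3 - γ) * π ^ γ * |t - s| ^ γ * ((j : ℝ) + 2) ^ (-(α - γ))) :=
          mul_le_mul_of_nonneg_left
            (rpow_neg_mul_cos_mul_sub_cos_mul_sq_le hγ0.le (by linarith) (by positivity) s t) hC.le
      _ = c * ((j : ℝ) + 2) ^ (-(α - γ)) := by ring
  rw [hK, hK, hK, ← hsum.tsum_eq]
  calc _ ≤ ∑' j : ℕ, c * ((j : ℝ) + 2) ^ (-(α - γ)) :=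
        hsum.summable.tsum_le_tsum hterm ((summable_nat_add_two_rpow_neg (by linarith)).mul_left c)
    _ = c * ∑' j : ℕ, ((j : ℝ) + 2) ^ (-(α - γ)) := tsum_mul_left
    _ ≤ c * (1 / (α - γ - 1)) := by
        gcongr
        exact tsum_nat_add_two_rpow_neg_le (by linarith)
    _ = _ := by ring
end

section
/- For probability measures P = ⊗_{i<=n} P_i and Q = ⊗_{i<=n} Q_i that are product measures, the affinity satisfies ‖P ∧ Q‖ >= 1 - (2 ∧ ∑_{i<=n} H^2(P_i, Q_i))^{1/2}. -/
open MeasureTheory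

/-- For a nonnegative measurable density whose `withDensity` measure is a probability
measure, the density is integrable with integral `1`. -/
lemma aux_integrable_of_prob {α : Type*} [MeasurableSpace α] (μ : Measure α) (f : α → ℝ)
    (hf : Measurable f) (h0 : ∀ x, 0 ≤ f x)
    (hprob : IsProbabilityMeasure (μ.withDensity fun x => ENNReal.ofReal (f x))) :
    Integrable f μ ∧ ∫ x, f x ∂μ = 1 := by
  have hl : ∫⁻ x, ENNReal.ofReal (f x) ∂μ = 1 := by
    have h := hprob.measure_univ
    rwa [withDensity_apply _ MeasurableSet.univ, setLIntegral_univ] at h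
  have hint : Integrable f μ := by
    refine ⟨hf.aestronglyMeasurable, ?_⟩
    rw [hasFiniteIntegral_iff_ofReal (Filter.Eventually.of_forall h0), hl]
    exact ENNReal.one_lt_top
  refine ⟨hint, ?_⟩
  rw [integral_eq_lintegral_of_nonneg_ae (Filter.Eventually.of_forall h0)
    hf.aestronglyMeasurable, hl]
  simp

/-- Weierstrass product inequality: `1 - ∑ tᵢ ≤ ∏ (1 - tᵢ)` for `tᵢ ∈ [0,1]`. -/
lemma aux_weierstrass {ι : Type*} (s : Finset ι) (t : ι → ℝ)
    (h0 : ∀ i, 0 ≤ t i) (h1 : ∀ i, t i ≤ 1) :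
    1 - ∑ i ∈ s, t i ≤ ∏ i ∈ s, (1 - t i) := by
  classical
  induction s using Finset.induction with
  | empty => simp
  | insert _ _ hx ih =>
    rename_i a s'
    rw [Finset.sum_insert hx, Finset.prod_insert hx]
    have hs : 0 ≤ ∑ i ∈ s', t i := Finset.sum_nonneg fun i _ => h0 i
    have hta : 0 ≤ 1 - t a := by linarith [h1 a]
    have := mul_le_mul_of_nonneg_left ih hta
    nlinarith [h0 a]

/-- Affinity lower bound for product measures in terms of sum of squared
Hellinger distances: `‖⊗P_i ∧ ⊗Q_i‖ ≥ 1 - (2 ∧ ∑ H²(P_i,Q_i))^{1/2}`. -/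
theorem stmt_9 {n : ℕ} {X : Fin n → Type*} [∀ i, MeasurableSpace (X i)]
    (lam : ∀ i, Measure (X i)) [∀ i, SigmaFinite (lam i)]
    (p q : ∀ i, X i → ℝ)
    (hp : ∀ i, Measurable (p i)) (hq : ∀ i, Measurable (q i))
    (hp0 : ∀ i x, 0 ≤ p i x) (hq0 : ∀ i x, 0 ≤ q i x)
    (hPprob : ∀ i, IsProbabilityMeasure
      ((lam i).withDensity fun x => ENNReal.ofReal (p i x)))
    (hQprob : ∀ i, IsProbabilityMeasure
      ((lam i).withDensity fun x => ENNReal.ofReal (q i x))) :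
    ∫ x, min (∏ i, p i (x i)) (∏ i, q i (x i)) ∂(Measure.pi lam) ≥
      1 - Real.sqrt (min 2
        (∑ i, ∫ x, (Real.sqrt (p i x) - Real.sqrt (q i x)) ^ 2 ∂(lam i))) := by
  classical
  letI : ∀ i, MeasureSpace (X i) := fun i => ⟨lam i⟩
  haveI : ∀ i, SigmaFinite (volume : Measure (X i)) :=
    fun i => inferInstanceAs (SigmaFinite (lam i))
  have hvol : Measure.pi lam = (volume : Measure (∀ i, X i)) := rfl
  -- per-coordinate facts
  have hpI := fun i => aux_integrable_of_prob (lam i) (p i) (hp i) (hp0 i) (hPprob i)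
  have hqI := fun i => aux_integrable_of_prob (lam i) (q i) (hq i) (hq0 i) (hQprob i)
  set g : ∀ i, X i → ℝ := fun i x => Real.sqrt (p i x) * Real.sqrt (q i x) with hg_def
  have hg0 : ∀ i x, 0 ≤ g i x := fun i x =>
    mul_nonneg (Real.sqrt_nonneg _) (Real.sqrt_nonneg _)
  have hgmeas : ∀ i, Measurable (g i) := fun i => ((hp i).sqrt.mul (hq i).sqrt)
  have hgle : ∀ i x, g i x ≤ (p i x + q i x) / 2 := by
    intro i x
    simp only [hg_def]
    nlinarith [sq_nonneg (Real.sqrt (p i x) - Real.sqrt (q i x)),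
      Real.sq_sqrt (hp0 i x), Real.sq_sqrt (hq0 i x)]
  have hbint : ∀ i, Integrable (fun x => (p i x + q i x) / 2) (lam i) :=
    fun i => ((hpI i).1.add (hqI i).1).div_const 2
  have hgint : ∀ i, Integrable (g i) (lam i) := by
    intro i
    refine Integrable.mono' (hbint i) (hgmeas i).aestronglyMeasurable ?_
    exact Filter.Eventually.of_forall fun x => by
      rw [Real.norm_of_nonneg (hg0 i x)]; exact hgle i x
  set h : Fin n → ℝ := fun i => ∫ x, (Real.sqrt (p i x) - Real.sqrt (q i x)) ^ 2 ∂(lam i)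
    with hh_def
  have hIg : ∀ i, ∫ x, g i x ∂(lam i) = 1 - h i / 2 := by
    intro i
    have hexp : ∀ x, (Real.sqrt (p i x) - Real.sqrt (q i x)) ^ 2
        = (p i x + q i x) - 2 * g i x := by
      intro x
      have hpx := Real.sq_sqrt (hp0 i x)
      have hqx := Real.sq_sqrt (hq0 i x)
      simp only [hg_def]; ring_nf; nlinarith [hpx, hqx]
    have hpq1 : Integrable (fun x => p i x + q i x) (lam i) := (hpI i).1.add (hqI i).1
    have hg2 : Integrable (fun x => 2 * g i x) (lam i) := (hgint i).const_mul 2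
    have : h i = ∫ x, ((p i x + q i x) - 2 * g i x) ∂(lam i) := by
      rw [hh_def]; exact integral_congr_ae (Filter.Eventually.of_forall hexp)
    rw [this, integral_sub hpq1 hg2,
      integral_add (hpI i).1 (hqI i).1, (hpI i).2, (hqI i).2, integral_const_mul]
    ring
  have hIg0 : ∀ i, 0 ≤ ∫ x, g i x ∂(lam i) :=
    fun i => integral_nonneg fun x => hg0 i x
  have hIg1 : ∀ i, ∫ x, g i x ∂(lam i) ≤ 1 := by
    intro i
    calc ∫ x, g i x ∂(lam i) ≤ ∫ x, (p i x + q i x) / 2 ∂(lam i) :=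
          integral_mono (hgint i) (hbint i) fun x => hgle i x
      _ = 1 := by
          rw [integral_div, integral_add (hpI i).1 (hqI i).1, (hpI i).2, (hqI i).2]; norm_num
  have hh0 : ∀ i, 0 ≤ h i := fun i => by have := hIg1 i; rw [hIg i] at this; linarith
  have hh2 : ∀ i, h i ≤ 2 := fun i => by have := hIg0 i; rw [hIg i] at this; linarith
  set S : ℝ := ∑ i, h i with hS_def
  -- product level
  set A : (∀ i, X i) → ℝ := fun x => ∏ i, Real.sqrt (p i (x i)) with hA_def
  set B : (∀ i, X i) → ℝ := fun x => ∏ i, Real.sqrt (q i (x i)) with hB_def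
  have hA0 : ∀ x, 0 ≤ A x := fun x => Finset.prod_nonneg fun i _ => Real.sqrt_nonneg _
  have hB0 : ∀ x, 0 ≤ B x := fun x => Finset.prod_nonneg fun i _ => Real.sqrt_nonneg _
  have hA2 : ∀ x, A x ^ 2 = ∏ i, p i (x i) := by
    intro x
    rw [hA_def, ← Finset.prod_pow]
    exact Finset.prod_congr rfl fun i _ => Real.sq_sqrt (hp0 i (x i))
  have hB2 : ∀ x, B x ^ 2 = ∏ i, q i (x i) := by
    intro x
    rw [hB_def, ← Finset.prod_pow]
    exact Finset.prod_congr rfl fun i _ => Real.sq_sqrt (hq0 i (x i))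
  have hAB : ∀ x, A x * B x = ∏ i, g i (x i) := by
    intro x; rw [hA_def, hB_def, ← Finset.prod_mul_distrib]
  -- integrability on the product
  have hPint : Integrable (fun x : ∀ i, X i => ∏ i, p i (x i)) volume :=
    Integrable.fin_nat_prod (𝕜 := ℝ) fun i => (hpI i).1
  have hQint : Integrable (fun x : ∀ i, X i => ∏ i, q i (x i)) volume :=
    Integrable.fin_nat_prod (𝕜 := ℝ) fun i => (hqI i).1
  have hGint : Integrable (fun x : ∀ i, X i => ∏ i, g i (x i)) volume :=
    Integrable.fin_nat_prod (𝕜 := ℝ) fun i => hgint i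
  have hA2int : Integrable (fun x => A x ^ 2) volume := by
    refine hPint.congr (Filter.Eventually.of_forall fun x => (hA2 x).symm)
  have hB2int : Integrable (fun x => B x ^ 2) volume := by
    refine hQint.congr (Filter.Eventually.of_forall fun x => (hB2 x).symm)
  have hABint : Integrable (fun x => A x * B x) volume := by
    refine hGint.congr (Filter.Eventually.of_forall fun x => (hAB x).symm)
  have hPI : ∫ x, (∏ i, p i (x i)) ∂(volume : Measure (∀ i, X i)) = 1 := by
    rw [integral_fin_nat_prod_volume_eq_prod (𝕜 := ℝ)]
    exact Finset.prod_eq_one fun i _ => (hpI i).2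
  have hQI : ∫ x, (∏ i, q i (x i)) ∂(volume : Measure (∀ i, X i)) = 1 := by
    rw [integral_fin_nat_prod_volume_eq_prod (𝕜 := ℝ)]
    exact Finset.prod_eq_one fun i _ => (hqI i).2
  set G : ℝ := ∫ x, A x * B x ∂(volume : Measure (∀ i, X i)) with hG_def
  have hGval : G = ∏ i, (1 - h i / 2) := by
    rw [hG_def, integral_congr_ae (Filter.Eventually.of_forall hAB),
      integral_fin_nat_prod_volume_eq_prod (𝕜 := ℝ)]
    exact Finset.prod_congr rfl fun i _ => hIg i
  have hG0 : 0 ≤ G := integral_nonneg fun x => mul_nonneg (hA0 x) (hB0 x)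
  have hG1 : G ≤ 1 := by
    rw [hGval]
    refine Finset.prod_le_one (fun i _ => by linarith [hh2 i]) (fun i _ => by linarith [hh0 i])
  have hGlow : 1 - S / 2 ≤ G := by
    rw [hGval, hS_def, Finset.sum_div]
    exact aux_weierstrass Finset.univ (fun i => h i / 2)
      (fun i => by linarith [hh0 i]) (fun i => by linarith [hh2 i])
  -- measurability of A, B
  have hAm : Measurable A := by
    rw [hA_def]
    exact Finset.measurable_prod _ fun i _ => ((hp i).comp (measurable_pi_apply i)).sqrt
  have hBm : Measurable B := by
    rw [hB_def]
    exact Finset.measurable_prod _ fun i _ => ((hq i).comp (measurable_pi_apply i)).sqrt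
  -- second moments of A-B and A+B
  have hsubint : Integrable (fun x => (A x - B x) ^ 2) volume := by
    have : (fun x => (A x - B x) ^ 2)
        = fun x => A x ^ 2 + B x ^ 2 - 2 * (A x * B x) := by
      funext x; ring
    rw [this]
    exact (hA2int.add hB2int).sub (hABint.const_mul 2)
  have haddint : Integrable (fun x => (A x + B x) ^ 2) volume := by
    have : (fun x => (A x + B x) ^ 2)
        = fun x => A x ^ 2 + B x ^ 2 + 2 * (A x * B x) := by
      funext x; ring
    rw [this]
    exact (hA2int.add hB2int).add (hABint.const_mul 2)
  have hPQint : Integrable (fun x : ∀ i, X i =>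
      (∏ i, p i (x i)) + (∏ i, q i (x i))) volume := hPint.add hQint
  have hAB2int : Integrable (fun x => 2 * (A x * B x)) volume := hABint.const_mul 2
  have hsubI : ∫ x, (A x - B x) ^ 2 ∂(volume : Measure (∀ i, X i)) = 2 - 2 * G := by
    have h1 : ∀ x, (A x - B x) ^ 2 = ((∏ i, p i (x i)) + (∏ i, q i (x i)))
        - 2 * (A x * B x) := by
      intro x; rw [← hA2 x, ← hB2 x]; ring
    rw [integral_congr_ae (Filter.Eventually.of_forall h1),
      integral_sub hPQint hAB2int,
      integral_add hPint hQint, hPI, hQI, integral_const_mul, ← hG_def]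
    ring
  have haddI : ∫ x, (A x + B x) ^ 2 ∂(volume : Measure (∀ i, X i)) = 2 + 2 * G := by
    have h1 : ∀ x, (A x + B x) ^ 2 = ((∏ i, p i (x i)) + (∏ i, q i (x i)))
        + 2 * (A x * B x) := by
      intro x; rw [← hA2 x, ← hB2 x]; ring
    rw [integral_congr_ae (Filter.Eventually.of_forall h1),
      integral_add hPQint hAB2int,
      integral_add hPint hQint, hPI, hQI, integral_const_mul, ← hG_def]
    ring
  -- Cauchy–Schwarz
  have hpq : Real.HolderConjugate 2 2 := Real.holderConjugate_iff.mpr ⟨one_lt_two, by norm_num⟩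
  have hofReal2 : ENNReal.ofReal (2 : ℝ) = 2 := by norm_num
  have hMemf : MemLp (fun x => |A x - B x|) (ENNReal.ofReal (2 : ℝ)) volume := by
    rw [hofReal2]
    refine (memLp_two_iff_integrable_sq
      (hAm.sub hBm).abs.aestronglyMeasurable).2 ?_
    refine hsubint.congr (Filter.Eventually.of_forall fun x => ?_)
    exact (sq_abs (A x - B x)).symm
  have hMemg : MemLp (fun x => A x + B x) (ENNReal.ofReal (2 : ℝ)) volume := by
    rw [hofReal2]
    exact (memLp_two_iff_integrable_sq (hAm.add hBm).aestronglyMeasurable).2 haddint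
  have hCS := integral_mul_le_Lp_mul_Lq_of_nonneg hpq
    (Filter.Eventually.of_forall fun x => abs_nonneg (A x - B x))
    (Filter.Eventually.of_forall fun x => add_nonneg (hA0 x) (hB0 x)) hMemf hMemg
  have hrpow : ∀ y : ℝ, y ^ (2 : ℝ) = y ^ 2 := by
    intro y
    rw [show (2 : ℝ) = ((2 : ℕ) : ℝ) by norm_num, Real.rpow_natCast]
  have hCS' : ∫ x, |A x - B x| * (A x + B x) ∂(volume : Measure (∀ i, X i)) ≤
      Real.sqrt (2 - 2 * G) * Real.sqrt (2 + 2 * G) := by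
    refine le_trans hCS ?_
    have e1 : ∫ x, |A x - B x| ^ (2 : ℝ) ∂(volume : Measure (∀ i, X i)) = 2 - 2 * G := by
      have efun : (fun x : ∀ i, X i => |A x - B x| ^ (2 : ℝ))
          = fun x => (A x - B x) ^ 2 :=
        funext fun x => by rw [hrpow, sq_abs]
      rw [efun, hsubI]
    have e2 : ∫ x, (A x + B x) ^ (2 : ℝ) ∂(volume : Measure (∀ i, X i)) = 2 + 2 * G := by
      have efun : (fun x : ∀ i, X i => (A x + B x) ^ (2 : ℝ))
          = fun x => (A x + B x) ^ 2 := funext fun x => hrpow _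
      rw [efun, haddI]
    rw [e1, e2, Real.sqrt_eq_rpow, Real.sqrt_eq_rpow]
  -- bound the right-hand side of CS
  have hH2le : 2 - 2 * G ≤ min 2 S := by
    refine le_min (by linarith) (by linarith)
  have hsqrt1 : Real.sqrt (2 - 2 * G) ≤ Real.sqrt (min 2 S) := Real.sqrt_le_sqrt hH2le
  have hsqrt2 : Real.sqrt (2 + 2 * G) ≤ 2 := by
    have h4 : Real.sqrt 4 = 2 := by
      rw [show (4 : ℝ) = 2 ^ 2 by norm_num, Real.sqrt_sq (by norm_num : (0:ℝ) ≤ 2)]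
    have := Real.sqrt_le_sqrt (show 2 + 2 * G ≤ 4 by linarith)
    linarith
  have hIabs : ∫ x, |(∏ i, p i (x i)) - (∏ i, q i (x i))| ∂(volume : Measure (∀ i, X i)) ≤
      2 * Real.sqrt (min 2 S) := by
    have e : ∀ x, |(∏ i, p i (x i)) - (∏ i, q i (x i))| = |A x - B x| * (A x + B x) := by
      intro x
      rw [← hA2 x, ← hB2 x, show A x ^ 2 - B x ^ 2 = (A x - B x) * (A x + B x) by ring,
        abs_mul, abs_of_nonneg (add_nonneg (hA0 x) (hB0 x))]
    rw [integral_congr_ae (Filter.Eventually.of_forall e)]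
    calc ∫ x, |A x - B x| * (A x + B x) ∂(volume : Measure (∀ i, X i)) ≤
        Real.sqrt (2 - 2 * G) * Real.sqrt (2 + 2 * G) := hCS'
      _ ≤ Real.sqrt (min 2 S) * 2 :=
          mul_le_mul hsqrt1 hsqrt2 (Real.sqrt_nonneg _) (Real.sqrt_nonneg _)
      _ = 2 * Real.sqrt (min 2 S) := by ring
  -- conclude
  have habsint : Integrable
      (fun x : ∀ i, X i => |(∏ i, p i (x i)) - (∏ i, q i (x i))|) volume :=
    (hPint.sub hQint).abs
  have hminI : ∫ x, min (∏ i, p i (x i)) (∏ i, q i (x i)) ∂(volume : Measure (∀ i, X i))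
      = 1 - (∫ x, |(∏ i, p i (x i)) - (∏ i, q i (x i))|
          ∂(volume : Measure (∀ i, X i))) / 2 := by
    have e : ∀ x : ∀ i, X i, min (∏ i, p i (x i)) (∏ i, q i (x i))
        = ((∏ i, p i (x i)) + (∏ i, q i (x i))
          - |(∏ i, p i (x i)) - (∏ i, q i (x i))|) / 2 := by
      intro x
      rcases le_total (∏ i, p i (x i)) (∏ i, q i (x i)) with hle | hle
      · rw [min_eq_left hle, abs_of_nonpos (by linarith)]; ring
      · rw [min_eq_right hle, abs_of_nonneg (by linarith)]; ring
    rw [integral_congr_ae (Filter.Eventually.of_forall e), integral_div,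
      integral_sub hPQint habsint, integral_add hPint hQint, hPI, hQI]
    ring
  rw [hvol, hminI]
  have hs0 : 0 ≤ Real.sqrt (min 2 S) := Real.sqrt_nonneg _
  linarith [hIabs]
end
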